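/- The function u is a classical solution of the nonlinear divergence-form equation ∇·a(∇u) = 0 on all of ℝ³ with boundary data 1/3 + cos x on {z = 0} and vanishing boundary layer limit; precisely: the vector field V(x,y,z) := a(∇u(x,y,z)) equals (−sin(x)·e^{−z}, 0, −cos(x)·e^{−z}), its divergence ∂V₁/∂x + ∂V₂/∂y + ∂V₃/∂z vanishes identically on ℝ³, u(x,y,0) = 1/3 + cos x for all (x,y), and sup_{(x,y)∈ℝ²} |u(x,y,z)| → 0 as z → ∞. -/

import Mathlib

set_option linter.unusedVariables false

/-- `f(p₁,p₃) = (1/8)(√(8p₁² + 9p₃²) + p₃)`. -/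
noncomputable def f (p₁ p₃ : ℝ) : ℝ := (1/8) * (Real.sqrt (8 * p₁^2 + 9 * p₃^2) + p₃)

/-- `a(p₁,p₂,p₃) = (p₁, p₂, p₃ + f(p₁,p₃))`. -/
noncomputable def a3 (p₁ p₂ p₃ : ℝ) : ℝ × ℝ × ℝ := (p₁, p₂, p₃ + f p₁ p₃)

/-- `u(x,y,z) = (1/3 + cos x)·e^{−z}`. -/
noncomputable def u (x y z : ℝ) : ℝ := (1/3 + Real.cos x) * Real.exp (-z)

lemma key (x z : ℝ) :
    Real.sqrt (8 * (-Real.sin x * Real.exp (-z))^2 + 9 * (-(1/3 + Real.cos x) * Real.exp (-z))^2)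
      = (3 + Real.cos x) * Real.exp (-z) := by
  have h : 8 * (-Real.sin x * Real.exp (-z))^2 + 9 * (-(1/3 + Real.cos x) * Real.exp (-z))^2
      = ((3 + Real.cos x) * Real.exp (-z))^2 := by
    linear_combination (8 * Real.exp (-z)^2) * Real.sin_sq_add_cos_sq x
  rw [h, Real.sqrt_sq (mul_nonneg (by nlinarith [Real.neg_one_le_cos x]) (Real.exp_pos _).le)]

lemma expderiv (z : ℝ) : HasDerivAt (fun s : ℝ => Real.exp (-s)) (-Real.exp (-z)) z := by
  simpa using (hasDerivAt_neg z).exp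

lemma a3val (x z : ℝ) :
    a3 (-Real.sin x * Real.exp (-z)) 0 (-(1/3 + Real.cos x) * Real.exp (-z))
      = (-Real.sin x * Real.exp (-z), 0, -Real.cos x * Real.exp (-z)) := by
  simp only [a3, f, Prod.mk.injEq]
  refine ⟨trivial, trivial, ?_⟩
  rw [key x z]; ring

/-- `u` is a classical solution of `∇·a(∇u) = 0` on `ℝ³` with boundary data `1/3 + cos x`
on `{z = 0}` and vanishing boundary layer limit: the gradient of `u` is
`(−sin(x)e^{−z}, 0, −(1/3+cos x)e^{−z})`, the vector field `V = a(∇u)` equals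
`(−sin(x)e^{−z}, 0, −cos(x)e^{−z})`, its divergence `∂V₁/∂x + ∂V₂/∂y + ∂V₃/∂z` vanishes
identically, `u(x,y,0) = 1/3 + cos x`, and `sup_{(x,y)} |u(x,y,z)| → 0` as `z → ∞`. -/
theorem stmt_5 :
    (∀ x y z : ℝ,
      -- the gradient of u
      HasDerivAt (fun t => u t y z) (-Real.sin x * Real.exp (-z)) x ∧
      HasDerivAt (fun t => u x t z) 0 y ∧
      HasDerivAt (fun t => u x y t) (-(1/3 + Real.cos x) * Real.exp (-z)) z ∧
      -- V = a(∇u) equals (−sin(x)e^{−z}, 0, −cos(x)e^{−z})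
      a3 (-Real.sin x * Real.exp (-z)) 0 (-(1/3 + Real.cos x) * Real.exp (-z))
        = (-Real.sin x * Real.exp (-z), 0, -Real.cos x * Real.exp (-z)) ∧
      -- ∂V₁/∂x
      HasDerivAt
        (fun s => (a3 (-Real.sin s * Real.exp (-z)) 0 (-(1/3 + Real.cos s) * Real.exp (-z))).1)
        (-Real.cos x * Real.exp (-z)) x ∧
      -- ∂V₂/∂y
      HasDerivAt
        (fun s => (a3 (-Real.sin x * Real.exp (-z)) 0 (-(1/3 + Real.cos x) * Real.exp (-z))).2.1)
        0 y ∧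
      -- ∂V₃/∂z
      HasDerivAt
        (fun s => (a3 (-Real.sin x * Real.exp (-s)) 0 (-(1/3 + Real.cos x) * Real.exp (-s))).2.2)
        (Real.cos x * Real.exp (-z)) z ∧
      -- the divergence vanishes
      (-Real.cos x * Real.exp (-z)) + 0 + (Real.cos x * Real.exp (-z)) = 0 ∧
      -- boundary data
      u x y 0 = 1/3 + Real.cos x) ∧
    -- vanishing boundary layer limit
    Filter.Tendsto (fun z => ⨆ p : ℝ × ℝ, |u p.1 p.2 z|) Filter.atTop (nhds 0) := by
  constructor
  · intro x y z
    refine ⟨?_, ?_, ?_, a3val x z, ?_, ?_, ?_, by ring, ?_⟩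
    · have h := ((Real.hasDerivAt_cos x).const_add (1/3)).mul_const (Real.exp (-z))
      have he : (fun t => u t y z) = fun t => (1/3 + Real.cos t) * Real.exp (-z) := rfl
      rw [he]; convert h using 1
    · simpa [u] using (hasDerivAt_const y ((1/3 + Real.cos x) * Real.exp (-z)))
    · have h := (expderiv z).const_mul (1/3 + Real.cos x)
      have he : (fun t => u x y t) = fun t => (1/3 + Real.cos x) * Real.exp (-t) := rfl
      rw [he]; exact h.congr_deriv (by ring)
    · have : (fun s => (a3 (-Real.sin s * Real.exp (-z)) 0
          (-(1/3 + Real.cos s) * Real.exp (-z))).1)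
          = fun s => -Real.sin s * Real.exp (-z) := by
        funext s; simp [a3]
      rw [this]
      simpa using ((Real.hasDerivAt_sin x).neg.mul_const (Real.exp (-z)))
    · exact hasDerivAt_const y _
    · have : (fun s => (a3 (-Real.sin x * Real.exp (-s)) 0
          (-(1/3 + Real.cos x) * Real.exp (-s))).2.2)
          = fun s => -Real.cos x * Real.exp (-s) := by
        funext s
        simp only [a3, f]
        rw [key x s]; ring
      rw [this]
      have h := (expderiv z).const_mul (-Real.cos x)
      exact h.congr_deriv (by ring)
    · simp [u]
  · have heq : (fun z => ⨆ p : ℝ × ℝ, |u p.1 p.2 z|)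
        = fun z => (4/3) * Real.exp (-z) := by
      funext z
      apply le_antisymm
      · apply ciSup_le
        intro p
        show |u p.1 p.2 z| ≤ 4/3 * Real.exp (-z)
        have h1 : |u p.1 p.2 z| = |1/3 + Real.cos p.1| * Real.exp (-z) := by
          rw [u, abs_mul, abs_of_pos (Real.exp_pos _)]
        rw [h1]
        have h2 : |1/3 + Real.cos p.1| ≤ 4/3 := by
          rw [abs_le]
          constructor <;> nlinarith [Real.neg_one_le_cos p.1, Real.cos_le_one p.1]
        nlinarith [Real.exp_pos (-z)]
      · have hb : BddAbove (Set.range (fun p : ℝ × ℝ => |u p.1 p.2 z|)) := by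
          refine ⟨(4/3) * Real.exp (-z), ?_⟩
          rintro _ ⟨p, rfl⟩
          show |u p.1 p.2 z| ≤ 4/3 * Real.exp (-z)
          have h1 : |u p.1 p.2 z| = |1/3 + Real.cos p.1| * Real.exp (-z) := by
            rw [u, abs_mul, abs_of_pos (Real.exp_pos _)]
          rw [h1]
          have h2 : |1/3 + Real.cos p.1| ≤ 4/3 := by
            rw [abs_le]
            constructor <;> nlinarith [Real.neg_one_le_cos p.1, Real.cos_le_one p.1]
          nlinarith [Real.exp_pos (-z)]
        have := le_ciSup hb ((0 : ℝ), (0 : ℝ))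
        have hval : |u 0 0 z| = (4/3) * Real.exp (-z) := by
          rw [u]
          simp [abs_of_pos, Real.exp_pos, abs_mul, abs_of_pos (Real.exp_pos (-z))]
          norm_num
        rwa [hval] at this
    rw [heq]
    have : Filter.Tendsto (fun z : ℝ => Real.exp (-z)) Filter.atTop (nhds 0) :=
      Real.tendsto_exp_neg_atTop_nhds_zero
    simpa using this.const_mul (4/3 : ℝ)
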